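/- Cancellation lemma (condensation mechanism): Let σ⃗ be an n-replica configuration with +1 boundary conditions, let 𝒦 ∈ 𝒦(σ⃗) be a continent of σ⃗, and let i₁, …, iₙ ∈ Λ be sites such that the number l of indices k with i_k ∈ 𝒦 satisfies 1 ≤ l < n. Then Σ_{k=0}^{n−1} s^{(1)}_{i₁}(π_𝒦^k σ⃗) ⋯ s^{(1)}_{iₙ}(π_𝒦^k σ⃗) · e^{−β H_rep(π_𝒦^k σ⃗)} = 0, where π_𝒦^k denotes the local cyclic replica transformation π_𝒦 applied k times. -/

import Mathlib

open scoped BigOperators Classical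
noncomputable section

namespace IsingReplica

/-- Lattice sites in `ℤ^d`. -/
abbrev Site (d : ℕ) := Fin d → ℤ

/-- `i` and `j` are nearest neighbors: `|i - j| = 1`. -/
def nn {d : ℕ} (i j : Site d) : Prop := (∑ k, |i k - j k|) = 1

instance {d : ℕ} (i j : Site d) : Decidable (nn i j) :=
  inferInstanceAs (Decidable ((∑ k, |i k - j k|) = 1))

/-- The spin values `{+1, -1}`. -/
abbrev SpinVal : Type := ↥({1, -1} : Finset ℤ)

/-- Spin configurations on a finite volume `Λ`. -/
abbrev Config {d : ℕ} (Λ : Finset (Site d)) : Type := {x // x ∈ Λ} → SpinVal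

/-- The spin at a site, as a real number (extended by `+1` outside `Λ`). -/
def spin {d : ℕ} {Λ : Finset (Site d)} (σ : Config Λ) (i : Site d) : ℝ :=
  if h : i ∈ Λ then ((σ ⟨i, h⟩ : ℤ) : ℝ) else 1

/-- The boundary sites of `Λ`: sites whose unit cube shares a `(d-1)`-face with the
topological boundary of the union of the closed unit cubes of `Λ`; equivalently,
sites of `Λ` having a nearest neighbor outside `Λ`. -/
def latBoundary {d : ℕ} (Λ : Finset (Site d)) : Finset (Site d) :=
  Λ.filter fun i => ∃ j, nn i j ∧ j ∉ Λ

/-- `+1` boundary conditions. -/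
def PlusBC {d : ℕ} {Λ : Finset (Site d)} (σ : Config Λ) : Prop :=
  ∀ i (h : i ∈ Λ), i ∈ latBoundary Λ → ((σ ⟨i, h⟩ : ℤ) = 1)

/-- The Ising Hamiltonian `H_Λ(σ) = Σ_{⟨i,j⟩} (1 - σ_i σ_j)`, the sum over unordered
nearest-neighbor pairs written as half the sum over ordered pairs. -/
def HΛ {d : ℕ} {Λ : Finset (Site d)} (σ : Config Λ) : ℝ :=
  (1 / 2) * ∑ i : {x // x ∈ Λ}, ∑ j : {x // x ∈ Λ},
    if nn i.1 j.1 then 1 - spin σ i.1 * spin σ j.1 else 0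

/-- The partition function with `+1` boundary conditions. -/
def Z {d : ℕ} (Λ : Finset (Site d)) (β : ℝ) : ℝ :=
  ∑ σ : Config Λ, if PlusBC σ then Real.exp (-β * HΛ σ) else 0

/-- The Gibbs expectation `⟨f⟩_{Λ,β}` with `+1` boundary conditions. -/
def gibbsExp {d : ℕ} (Λ : Finset (Site d)) (β : ℝ) (f : Config Λ → ℝ) : ℝ :=
  (Z Λ β)⁻¹ * ∑ σ : Config Λ, if PlusBC σ then f σ * Real.exp (-β * HΛ σ) else 0

/-- The set partitions of `{0, …, m-1}`: families of nonempty blocks such that every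
element lies in exactly one block. -/
def partitions (m : ℕ) : Finset (Finset (Finset (Fin m))) :=
  Finset.univ.filter fun P =>
    (∀ B ∈ P, B.Nonempty) ∧ ∀ x : Fin m, ∃! B, B ∈ P ∧ x ∈ B

/-- The truncated (connected) correlation
`⟨σ_{j 0} ⋯ σ_{j (m-1)}⟩^T = Σ_𝒫 (-1)^(|𝒫|-1) (|𝒫|-1)! ∏_{B ∈ 𝒫} ⟨∏_{k ∈ B} σ_{j k}⟩`. -/
def truncCorr {d : ℕ} (Λ : Finset (Site d)) (β : ℝ) {m : ℕ} (j : Fin m → Site d) : ℝ :=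
  ∑ P ∈ partitions m,
    (-1 : ℝ) ^ (P.card - 1) * (Nat.factorial (P.card - 1) : ℝ) *
      ∏ B ∈ P, gibbsExp Λ β fun σ => ∏ k ∈ B, spin σ (j k)

/-- `n`-replica configurations on `Λ`. -/
abbrev RConfig {d : ℕ} (Λ : Finset (Site d)) (n : ℕ) : Type :=
  {x // x ∈ Λ} → Fin n → SpinVal

/-- The replica component `σ^{(α)}` (the index `a : Fin n` encodes `α = a + 1`). -/
def comp {d n : ℕ} {Λ : Finset (Site d)} (σv : RConfig Λ n) (a : Fin n) : Config Λ :=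
  fun i => σv i a

/-- `+1` boundary conditions in every replica component. -/
def RPlusBC {d n : ℕ} {Λ : Finset (Site d)} (σv : RConfig Λ n) : Prop :=
  ∀ a, PlusBC (comp σv a)

/-- The replica Hamiltonian `H_rep(σ⃗) = Σ_α H_Λ(σ^{(α)})`. -/
def Hrep {d n : ℕ} {Λ : Finset (Site d)} (σv : RConfig Λ n) : ℝ :=
  ∑ a, HΛ (comp σv a)

/-- The spin of the replica component `α = a + 1` at site `i`. -/
def rspin {d n : ℕ} {Λ : Finset (Site d)} (σv : RConfig Λ n) (a : Fin n) (i : Site d) : ℝ :=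
  spin (comp σv a) i

/-- `ω = e^{2πi/n}`, the primitive `n`-th root of unity. -/
def rootn (n : ℕ) : ℂ := Complex.exp (2 * Real.pi * Complex.I / n)

/-- The replica Fourier variables
`s_i^{(γ)}(σ⃗) = n^{-1/2} Σ_{α'=1}^n ω^{γ(α'-1)} σ_i^{(α')}`
(the summation index `a : Fin n` encodes `α' = a + 1`). -/
def sVar {d n : ℕ} {Λ : Finset (Site d)} (γ : ℕ) (σv : RConfig Λ n) (i : Site d) : ℂ :=
  (Real.sqrt n : ℂ)⁻¹ * ∑ a : Fin n, rootn n ^ (γ * (a : ℕ)) * (rspin σv a i : ℂ)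

/-- The replica expectation `⟨⟨F⟩⟩_{Λ,β} = Z^{-n} Σ_{σ⃗} F(σ⃗) e^{-β H_rep(σ⃗)}`. -/
def rExp {d : ℕ} (Λ : Finset (Site d)) (β : ℝ) (n : ℕ) (F : RConfig Λ n → ℂ) : ℂ :=
  ((Z Λ β ^ n : ℝ) : ℂ)⁻¹ *
    ∑ σv : RConfig Λ n,
      if RPlusBC σv then F σv * Complex.exp (-(β : ℂ) * (Hrep σv : ℂ)) else 0

/-- The truncated replica expectation of `m` factors, defined by the partition formula. -/
def rTrunc {d : ℕ} (Λ : Finset (Site d)) (β : ℝ) (n : ℕ) {m : ℕ}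
    (F : Fin m → RConfig Λ n → ℂ) : ℂ :=
  ∑ P ∈ partitions m,
    (-1 : ℂ) ^ (P.card - 1) * (Nat.factorial (P.card - 1) : ℂ) *
      ∏ B ∈ P, rExp Λ β n fun σv => ∏ k ∈ B, F k σv

/-- Connectivity of `a` and `b` by a nearest-neighbor path inside the set `X`. -/
def connIn {d : ℕ} (X : Finset (Site d)) (a b : Site d) : Prop :=
  Relation.ReflTransGen (fun x y => x ∈ X ∧ y ∈ X ∧ nn x y) a b

/-- The sites of `Λ` where all replica components equal `+1`. -/
def onesSet {d n : ℕ} {Λ : Finset (Site d)} (σv : RConfig Λ n) : Finset (Site d) :=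
  Λ.filter fun i => ∀ h : i ∈ Λ, ∀ a, ((σv ⟨i, h⟩ a : ℤ) = 1)

/-- The replica sea: the part of the all-ones set connected to the boundary `∂Λ`. -/
def sea {d n : ℕ} {Λ : Finset (Site d)} (σv : RConfig Λ n) : Finset (Site d) :=
  (onesSet σv).filter fun i => ∃ j ∈ latBoundary Λ, connIn (onesSet σv) j i

/-- `K` is a continent of `σ⃗`: a connected component of `Λ \ 𝒮(σ⃗)`. -/
def IsContinent {d n : ℕ} {Λ : Finset (Site d)} (σv : RConfig Λ n)
    (K : Finset (Site d)) : Prop :=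
  K.Nonempty ∧ K ⊆ Λ \ sea σv ∧
    (∀ a ∈ K, ∀ b ∈ K, connIn (Λ \ sea σv) a b) ∧
    (∀ a ∈ K, ∀ b ∈ Λ \ sea σv, connIn (Λ \ sea σv) a b → b ∈ K)

/-- The local cyclic replica transformation `π_𝒦`: on sites of `K` it cyclically shifts
the replica index (`(π_𝒦 σ⃗)_i^{(α)} = σ_i^{(α-1)}`, indices mod `n`), elsewhere it is
the identity. -/
def piK {d n : ℕ} {Λ : Finset (Site d)} (K : Finset (Site d)) (σv : RConfig Λ n) :
    RConfig Λ n :=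
  fun i a => if (i : Site d) ∈ K then σv i ⟨((a : ℕ) + n - 1) % n, Nat.mod_lt _ a.pos⟩ else σv i a

/-- The length of the shortest tree connecting the sites `i 0, …, i (m-1)`:
the minimal number of edges of a connected subgraph of the nearest-neighbor graph
on `ℤ^d` whose vertex set contains all the given sites. -/
def treeLen {d m : ℕ} (i : Fin m → Site d) : ℕ :=
  sInf {r : ℕ | ∃ E : Finset (Site d × Site d),
    E.card = r ∧ (∀ e ∈ E, nn e.1 e.2) ∧
    ∀ x ∈ Finset.univ.image i ∪ E.image Prod.fst ∪ E.image Prod.snd,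
      ∀ y ∈ Finset.univ.image i ∪ E.image Prod.fst ∪ E.image Prod.snd,
        Relation.ReflTransGen (fun a b => (a, b) ∈ E ∨ (b, a) ∈ E) x y}

/-- A face: the common `(d-1)`-face of the unit cubes centered at `c` and `c + e_k`,
encoded by the pair `(c, k)`. -/
abbrev Face (d : ℕ) := Site d × Fin d

/-- The face `(c, k)` as a subset of `ℝ^d`. -/
def faceSet {d : ℕ} (F : Face d) : Set (Fin d → ℝ) :=
  {x | x F.2 = (F.1 F.2 : ℝ) + 1 / 2 ∧ ∀ j, j ≠ F.2 → |x j - (F.1 j : ℝ)| ≤ 1 / 2}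

/-- Two faces are adjacent if they are distinct and their intersection contains a
`(d-2)`-dimensional unit cube. -/
def adjFace {d : ℕ} (F F' : Face d) : Prop :=
  F ≠ F' ∧ ∃ j₁ j₂ : Fin d, j₁ ≠ j₂ ∧ ∃ z : Fin d → ℝ,
    {x : Fin d → ℝ | x j₁ = z j₁ ∧ x j₂ = z j₂ ∧
        ∀ j, j ≠ j₁ → j ≠ j₂ → z j ≤ x j ∧ x j ≤ z j + 1} ⊆ faceSet F ∩ faceSet F'

/-- Connectivity of faces by a chain of adjacent faces inside `Y`. -/
def faceConnIn {d : ℕ} (Y : Finset (Face d)) (A B : Face d) : Prop :=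
  Relation.ReflTransGen (fun x y => x ∈ Y ∧ y ∈ Y ∧ adjFace x y) A B

/-- A connected surface. -/
def SurfConnected {d : ℕ} (Y : Finset (Face d)) : Prop :=
  ∀ F ∈ Y, ∀ F' ∈ Y, faceConnIn Y F F'

/-- The `k`-th coordinate unit vector. -/
def unitVec {d : ℕ} (k : Fin d) : Site d := fun j => if j = k then 1 else 0

/-- The broken faces of a spin configuration: common faces of nearest-neighbor pairs
in `Λ` whose spins differ. -/
def brokenFaces {d : ℕ} {Λ : Finset (Site d)} (σ : Config Λ) : Finset (Face d) :=
  (Λ ×ˢ (Finset.univ : Finset (Fin d))).filter fun F =>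
    F.1 + unitVec F.2 ∈ Λ ∧ spin σ F.1 ≠ spin σ (F.1 + unitVec F.2)

/-- The faces forming the topological boundary of the union of the unit cubes of `K`. -/
def bFaces {d : ℕ} (K : Finset (Site d)) : Finset (Face d) :=
  ((K ×ˢ (Finset.univ : Finset (Fin d))).filter fun F => F.1 + unitVec F.2 ∉ K) ∪
    (((K ×ˢ (Finset.univ : Finset (Fin d))).image fun F => (F.1 - unitVec F.2, F.2)).filter
      fun F => F.1 ∉ K)

/-- The component `C^{(α)}(𝒦, σ⃗)` of the replica continent contour: the union of
those contours (connected components of broken faces) of `σ^{(α)}` sharing at least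
one face with `∂𝒦`. -/
def contContour {d n : ℕ} {Λ : Finset (Site d)} (σv : RConfig Λ n) (K : Finset (Site d))
    (a : Fin n) : Finset (Face d) :=
  (brokenFaces (comp σv a)).filter fun F =>
    ∃ F₀ ∈ brokenFaces (comp σv a), F₀ ∈ bFaces K ∧ faceConnIn (brokenFaces (comp σv a)) F₀ F

/-- `C(𝒦)`: the set of replica continent contours `C⃗(𝒦, σ⃗)` as `σ⃗` ranges over
`n`-replica configurations (with `+1` boundary conditions) having `𝒦` as a continent. -/
def contourSet {d : ℕ} (Λ : Finset (Site d)) (n : ℕ) (K : Finset (Site d)) :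
    Set (Fin n → Finset (Face d)) :=
  {C | ∃ σv : RConfig Λ n, RPlusBC σv ∧ IsContinent σv K ∧ ∀ a, C a = contContour σv K a}

end IsingReplica

/-! `π_𝒦` leaves `H_rep` invariant: on a bond inside `𝒦` it relabels the replicas at both ends
by the same cyclic shift, and a bond leaving `𝒦` ends in the sea, where every replica is `+1`.
On the Fourier variables `s^{(1)}_j` it acts as multiplication by `ω` for `j ∈ 𝒦` and trivially
otherwise. Hence the `k`-th summand is `(ω^l)^k` times the `0`-th one, and
`Σ_{k<n} (ω^l)^k = 0` because `ω^l ≠ 1` is an `n`-th root of unity. -/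

lemma geom_sum_eq_zero_of_pow_eq_one {R : Type*} [CommRing R] [IsDomain R] {x : R} {n : ℕ}
    (hx : x ≠ 1) (hxn : x ^ n = 1) : ∑ k ∈ Finset.range n, x ^ k = 0 :=
  eq_zero_of_ne_zero_of_mul_left_eq_zero (sub_ne_zero_of_ne hx.symm)
    (by rw [mul_neg_geom_sum, hxn, sub_self])

lemma sum_pow_val_mul_comp_sub_one {R : Type*} [CommSemiring R] {n : ℕ} [NeZero n] {ω : R}
    (hω : ω ^ n = 1) (f : Fin n → R) :
    ∑ a : Fin n, ω ^ (a : ℕ) * f (a - 1) = ω * ∑ a : Fin n, ω ^ (a : ℕ) * f a := by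
  rw [← Equiv.sum_comp (Equiv.addRight 1), Finset.mul_sum]
  refine Finset.sum_congr rfl fun a _ => ?_
  rw [Equiv.coe_addRight, add_sub_cancel_right, Fin.val_add, Fin.val_one', ← pow_eq_pow_mod _ hω,
    pow_add, ← pow_eq_pow_mod _ hω, pow_one]
  ring

namespace IsingReplica

variable {d n : ℕ} {Λ : Finset (Site d)} {K : Finset (Site d)}

lemma nn.symm {i j : Site d} (h : nn i j) : nn j i := by
  unfold nn at h ⊢
  simpa [abs_sub_comm] using h

lemma isPrimitiveRoot_rootn (hn : n ≠ 0) : IsPrimitiveRoot (rootn n) n :=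
  Complex.isPrimitiveRoot_exp n hn

lemma rootn_pow_self : rootn n ^ n = 1 := by
  rcases eq_or_ne n 0 with rfl | hn
  · rfl
  · exact (isPrimitiveRoot_rootn hn).pow_eq_one

lemma rspin_piK [NeZero n] (τ : RConfig Λ n) (a : Fin n) (j : Site d) :
    rspin (piK K τ) a j = if j ∈ K then rspin τ (a - 1) j else rspin τ a j := by
  have hidx : (⟨((a : ℕ) + n - 1) % n, Nat.mod_lt _ a.pos⟩ : Fin n) = a - 1 := by
    rw [eq_sub_iff_add_eq, Fin.ext_iff, Fin.val_add, Fin.val_one', Nat.add_mod_mod,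
      Nat.mod_add_mod, show (a : ℕ) + n - 1 + 1 = a + n by have := a.pos; omega,
      Nat.add_mod_right, Nat.mod_eq_of_lt a.isLt]
  by_cases hj : j ∈ Λ <;> by_cases hjK : j ∈ K <;> simp [rspin, spin, comp, piK, hj, hjK, hidx]

def PlusOnOuterBoundary (K : Finset (Site d)) (τ : RConfig Λ n) : Prop :=
  ∀ x ∈ K, ∀ j ∉ K, nn x j → ∀ a, rspin τ a j = 1

lemma IsContinent.plusOnOuterBoundary {σv : RConfig Λ n} (hK : IsContinent σv K) :
    PlusOnOuterBoundary K σv := by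
  intro x hxK j hjK hxj a
  by_cases hjΛ : j ∈ Λ
  · have hj_sea : j ∈ sea σv := by
      by_contra hj_sea
      have hj : j ∈ Λ \ sea σv := Finset.mem_sdiff.mpr ⟨hjΛ, hj_sea⟩
      exact hjK (hK.2.2.2 x hxK j hj (.single ⟨hK.2.1 hxK, hj, hxj⟩))
    have hj_ones := (Finset.mem_filter.mp (Finset.mem_filter.mp hj_sea).1).2
    simp [rspin, spin, comp, hjΛ, hj_ones hjΛ a]
  · simp [rspin, spin, hjΛ]

lemma PlusOnOuterBoundary.piK [NeZero n] {τ : RConfig Λ n} (h : PlusOnOuterBoundary K τ) :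
    PlusOnOuterBoundary K (piK K τ) := by
  intro x hxK j hjK hxj a
  rw [rspin_piK, if_neg hjK]
  exact h x hxK j hjK hxj a

lemma sum_rspin_mul_rspin_piK [NeZero n] {τ : RConfig Λ n} (h : PlusOnOuterBoundary K τ)
    {x y : Site d} (hxy : nn x y) :
    ∑ a, rspin (piK K τ) a x * rspin (piK K τ) a y = ∑ a, rspin τ a x * rspin τ a y := by
  have shift (f : Fin n → ℝ) : ∑ a, f (a - 1) = ∑ a, f a :=
    Equiv.sum_comp (Equiv.subRight 1) f
  simp only [rspin_piK]
  by_cases hxK : x ∈ K <;> by_cases hyK : y ∈ K <;> simp only [hxK, hyK, if_true, if_false]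
  · exact shift fun a => rspin τ a x * rspin τ a y
  · simp only [h x hxK y hyK hxy, mul_one]
    exact shift fun a => rspin τ a x
  · simp only [h y hyK x hxK hxy.symm, one_mul]
    exact shift fun a => rspin τ a y

lemma Hrep_eq_sum_bonds (ρ : RConfig Λ n) :
    Hrep ρ = (1 / 2) * ∑ i : {x // x ∈ Λ}, ∑ j : {x // x ∈ Λ},
      if nn i.1 j.1 then n - ∑ a, rspin ρ a i.1 * rspin ρ a j.1 else 0 := by
  simp only [Hrep, HΛ, ← Finset.mul_sum]
  congr 1
  rw [Finset.sum_comm]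
  refine Finset.sum_congr rfl fun i _ => ?_
  rw [Finset.sum_comm]
  refine Finset.sum_congr rfl fun j _ => ?_
  split_ifs
  · simp [rspin, Finset.sum_sub_distrib]
  · simp

lemma Hrep_piK [NeZero n] {τ : RConfig Λ n} (h : PlusOnOuterBoundary K τ) :
    Hrep (piK K τ) = Hrep τ := by
  simp only [Hrep_eq_sum_bonds]
  congr 1
  refine Finset.sum_congr rfl fun i _ => Finset.sum_congr rfl fun j _ => ?_
  split_ifs with hij
  · rw [sum_rspin_mul_rspin_piK h hij]
  · rfl

lemma Hrep_iterate_piK [NeZero n] {τ : RConfig Λ n} (h : PlusOnOuterBoundary K τ) (k : ℕ) :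
    Hrep ((piK K)^[k] τ) = Hrep τ := by
  induction k generalizing τ with
  | zero => rfl
  | succ k ih => rw [Function.iterate_succ_apply, ih h.piK, Hrep_piK h]

lemma sVar_piK [NeZero n] (τ : RConfig Λ n) (j : Site d) :
    sVar 1 (piK K τ) j = (if j ∈ K then rootn n else 1) * sVar 1 τ j := by
  simp only [sVar, rspin_piK, one_mul]
  split_ifs
  · rw [sum_pow_val_mul_comp_sub_one rootn_pow_self fun a => (rspin τ a j : ℂ)]
    ring
  · rw [one_mul]

lemma sVar_iterate_piK [NeZero n] (τ : RConfig Λ n) (j : Site d) (k : ℕ) :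
    sVar 1 ((piK K)^[k] τ) j = (if j ∈ K then rootn n else 1) ^ k * sVar 1 τ j := by
  induction k with
  | zero => simp
  | succ k ih => rw [Function.iterate_succ_apply', sVar_piK, ih, pow_succ', mul_assoc]

lemma prod_sVar_iterate_piK [NeZero n] {ι : Type*} [Fintype ι] (τ : RConfig Λ n)
    (i : ι → Site d) (k : ℕ) :
    ∏ m, sVar 1 ((piK K)^[k] τ) (i m) =
      (rootn n ^ (Finset.univ.filter fun m => i m ∈ K).card) ^ k * ∏ m, sVar 1 τ (i m) := by
  simp only [sVar_iterate_piK, Finset.prod_mul_distrib, Finset.prod_pow, ← Finset.prod_filter,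
    Finset.prod_const, ← pow_mul, mul_comm]

theorem cancellation_lemma_general (d : ℕ)
    (Λ : Finset (Site d)) (β : ℝ) (n : ℕ)
    (σv : RConfig Λ n) (K : Finset (Site d)) (hK : IsContinent σv K)
    (i : Fin n → Site d)
    (hl1 : 1 ≤ (Finset.univ.filter fun k => i k ∈ K).card)
    (hln : (Finset.univ.filter fun k => i k ∈ K).card < n) :
    ∑ k ∈ Finset.range n,
      (∏ m, sVar 1 ((piK K)^[k] σv) (i m)) *
        Complex.exp (-(β : ℂ) * (Hrep ((piK K)^[k] σv) : ℂ)) = 0 := by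
  have : NeZero n := ⟨by omega⟩
  set l := (Finset.univ.filter fun k => i k ∈ K).card
  have hgeom : ∑ k ∈ Finset.range n, (rootn n ^ l) ^ k = 0 :=
    geom_sum_eq_zero_of_pow_eq_one
      ((isPrimitiveRoot_rootn (NeZero.ne n)).pow_ne_one_of_pos_of_lt (by omega) hln)
      (by rw [← pow_mul, mul_comm, pow_mul, rootn_pow_self, one_pow])
  simp only [prod_sVar_iterate_piK, Hrep_iterate_piK hK.plusOnOuterBoundary, mul_assoc,
    ← Finset.sum_mul]
  exact mul_eq_zero_of_left hgeom _

/-- **Cancellation lemma (condensation mechanism).** Let `σ⃗` be an `n`-replica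
configuration with `+1` boundary conditions, `𝒦 ∈ 𝒦(σ⃗)` a continent, and
`i 0, …, i (n-1) ∈ Λ` sites such that the number `l` of indices `k` with `i k ∈ 𝒦`
satisfies `1 ≤ l < n`.  Then
`Σ_{k=0}^{n-1} s^{(1)}_{i 0}(π_𝒦^k σ⃗) ⋯ s^{(1)}_{i (n-1)}(π_𝒦^k σ⃗) e^{-β H_rep(π_𝒦^k σ⃗)} = 0`. -/
theorem cancellation_lemma (d : ℕ) (hd : 2 ≤ d)
    (Λ : Finset (Site d)) (β : ℝ) (hβ : 0 < β) (n : ℕ) (hn : 1 ≤ n)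
    (σv : RConfig Λ n) (hbc : RPlusBC σv) (K : Finset (Site d)) (hK : IsContinent σv K)
    (i : Fin n → Site d) (hi : ∀ k, i k ∈ Λ)
    (hl1 : 1 ≤ (Finset.univ.filter fun k => i k ∈ K).card)
    (hln : (Finset.univ.filter fun k => i k ∈ K).card < n) :
    ∑ k ∈ Finset.range n,
      (∏ m, sVar 1 ((piK K)^[k] σv) (i m)) *
        Complex.exp (-(β : ℂ) * (Hrep ((piK K)^[k] σv) : ℂ)) = 0 :=
  cancellation_lemma_general d Λ β n σv K hK i hl1 hln
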